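/- For every type ρ (argument or predicate type) there exists a natural number d (depending only on ρ) such that for every finite nonempty base set U with n = |U| ≥ 2, the cardinality of the two-valued semantic domain ⟦ρ⟧_U is at most exp_{order(ρ)}(n^d), where exp_0(x) = x and exp_{k+1}(x) = 2^{exp_k(x)}. -/

import Mathlib

/-- The three-valued truth domain: false, undef, true. -/
inductive Three : Type where
  | fls : Three
  | undef : Three
  | tru : Three
deriving DecidableEq

def Three.toNat : Three → ℕ
  | .fls => 0
  | .undef => 1
  | .tru => 2

/-- Truth order on `Three`, induced by `fls < undef < tru`. -/
def Three.le (a b : Three) : Prop := a.toNat ≤ b.toNat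

/-- Precision order on `Three`, induced by `undef ≺ fls` and `undef ≺ tru`. -/
def Three.prec (a b : Three) : Prop := a = .undef ∨ a = b

/-- Predicate types `π ::= o | ρ → π` where the argument `ρ` is either the
individual type `ι` (constructor `arrI`) or a predicate type (constructor `arrP`). -/
inductive PTy : Type where
  | o : PTy
  | arrI : PTy → PTy
  | arrP : PTy → PTy → PTy

/-- Argument types `ρ ::= ι | π`. -/
inductive ATy : Type where
  | iota : ATy
  | pred : PTy → ATy

/-- Two-valued semantics of predicate types over base set `U`. -/
def sem2 (U : Type) : PTy → Type
  | .o => Bool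
  | .arrI π => U → sem2 U π
  | .arrP ρ π => sem2 U ρ → sem2 U π

/-- Three-valued semantics: functions take *two-valued* arguments. -/
def sem3 (U : Type) : PTy → Type
  | .o => Three
  | .arrI π => U → sem3 U π
  | .arrP ρ π => sem2 U ρ → sem3 U π

/-- Two-valued semantics of argument types. -/
def semA (U : Type) : ATy → Type
  | .iota => U
  | .pred π => sem2 U π

/-- Pointwise (truth) order on the two-valued domains. -/
def le2 (U : Type) : (π : PTy) → sem2 U π → sem2 U π → Prop
  | .o, a, b => @LE.le Bool _ a b
  | .arrI π, f, g => ∀ d : U, le2 U π (f d) (g d)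
  | .arrP ρ π, f, g => ∀ d : sem2 U ρ, le2 U π (f d) (g d)

/-- Pointwise truth order on the three-valued domains. -/
def le3 (U : Type) : (π : PTy) → sem3 U π → sem3 U π → Prop
  | .o, a, b => Three.le a b
  | .arrI π, f, g => ∀ d : U, le3 U π (f d) (g d)
  | .arrP ρ π, f, g => ∀ d : sem2 U ρ, le3 U π (f d) (g d)

/-- Pointwise precision order on the three-valued domains. -/
def prec3 (U : Type) : (π : PTy) → sem3 U π → sem3 U π → Prop
  | .o, a, b => Three.prec a b
  | .arrI π, f, g => ∀ d : U, prec3 U π (f d) (g d)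
  | .arrP ρ π, f, g => ∀ d : sem2 U ρ, prec3 U π (f d) (g d)

/-- The everywhere-undefined element of the three-valued domain. -/
def undef3 (U : Type) : (π : PTy) → sem3 U π
  | .o => Three.undef
  | .arrI π => fun _ => undef3 U π
  | .arrP _ρ π => fun _ => undef3 U π

def tauo : Three → Bool × Bool
  | .fls => (false, false)
  | .undef => (false, true)
  | .tru => (true, true)

/-- The map `τ_π` from the three-valued domain to pairs of two-valued elements. -/
def tau (U : Type) : (π : PTy) → sem3 U π → sem2 U π × sem2 U π
  | .o, a => tauo a
  | .arrI π, f => (fun d => (tau U π (f d)).1, fun d => (tau U π (f d)).2)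
  | .arrP _ρ π, f => (fun d => (tau U π (f d)).1, fun d => (tau U π (f d)).2)

/-- The map `τ⁻¹_π` from pairs of two-valued elements to the three-valued domain
(on non-consistent pairs at base type its value is irrelevant junk). -/
def tauInv (U : Type) : (π : PTy) → sem2 U π → sem2 U π → sem3 U π
  | .o, a, b => cond a (cond b Three.tru Three.undef) (cond b Three.undef Three.fls)
  | .arrI π, f, g => fun d => tauInv U π (f d) (g d)
  | .arrP _ρ π, f, g => fun d => tauInv U π (f d) (g d)

/-- The embedding `ε_π` of the two-valued domain into the three-valued one. -/
def eps (U : Type) : (π : PTy) → sem2 U π → sem3 U π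
  | .o, b => cond b Three.tru Three.fls
  | .arrI π, f => fun d => eps U π (f d)
  | .arrP _ρ π, f => fun d => eps U π (f d)

/-- The order of a predicate type: `order(o) = 1`,
`order(ρ→π) = max (order ρ + 1) (order π)` with `order ι = 0`. -/
def orderP : PTy → ℕ
  | .o => 1
  | .arrI π => max 1 (orderP π)
  | .arrP ρ π => max (orderP ρ + 1) (orderP π)

/-- The order of an argument type. -/
def orderA : ATy → ℕ
  | .iota => 0
  | .pred π => orderP π

/-- Iterated exponential: `expk 0 x = x`, `expk (k+1) x = 2 ^ expk k x`. -/
def expk : ℕ → ℕ → ℕ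
  | 0, x => x
  | k+1, x => 2 ^ expk k x

/-- The product of the cardinalities of the argument domains of a predicate type. -/
noncomputable def argProd (U : Type) : PTy → ℕ
  | .o => 1
  | .arrI π => Nat.card U * argProd U π
  | .arrP ρ π => Nat.card (sem2 U ρ) * argProd U π

/-- `s` is a least upper bound of `S` with respect to the relation `R`. -/
def IsLubR {α : Type _} (R : α → α → Prop) (S : Set α) (s : α) : Prop :=
  (∀ a ∈ S, R a s) ∧ ∀ b, (∀ a ∈ S, R a b) → R s b

/-- `s` is a greatest lower bound of `S` with respect to the relation `R`. -/
def IsGlbR {α : Type _} (R : α → α → Prop) (S : Set α) (s : α) : Prop :=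
  (∀ a ∈ S, R s a) ∧ ∀ b, (∀ a ∈ S, R b a) → R b s

/-- The set of consistent pairs `L^c = {(x,y) ∈ L × L | x ≤ y}`. -/
def Lc (L : Type _) [CompleteLattice L] : Type _ := {p : L × L // p.1 ≤ p.2}

/-- The precision order on consistent pairs: `(x,y) ≼ (x',y')` iff `x ≤ x'` and `y' ≤ y`. -/
def precPair {L : Type _} [CompleteLattice L] (a b : Lc L) : Prop :=
  a.1.1 ≤ b.1.1 ∧ b.1.2 ≤ a.1.2

/-!
Induct on the type. A function space `B → A` has `|A| ^ |B|` elements; if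
`|A| ≤ 2 ^ exp_j(n^a)` and `|B| ≤ exp_j(n^b)`, then
`|A| ^ |B| ≤ 2 ^ (exp_j(n^a) · exp_j(n^b)) ≤ 2 ^ exp_j(n^(a+b))`, because `exp_j` is
supermultiplicative on arguments `≥ 2`. So the exponents `d` add up along the arrows.
-/

@[simp]
lemma expk_succ (k x : ℕ) : expk (k + 1) x = 2 ^ expk k x := rfl

lemma expk_le_expk_succ (k x : ℕ) : expk k x ≤ expk (k + 1) x :=
  Nat.lt_two_pow_self.le

lemma expk_mono_left (x : ℕ) : Monotone (expk · x) :=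
  monotone_nat_of_le_succ fun k => expk_le_expk_succ k x

lemma le_expk (k x : ℕ) : x ≤ expk k x :=
  expk_mono_left x (Nat.zero_le k)

lemma expk_mul_expk_le {a b : ℕ} (k : ℕ) (ha : 2 ≤ a) (hb : 2 ≤ b) :
    expk k a * expk k b ≤ expk k (a * b) := by
  induction k with
  | zero => rfl
  | succ k ih =>
    rw [expk_succ, expk_succ, expk_succ, ← pow_add]
    exact Nat.pow_le_pow_right two_pos
      ((Nat.add_le_mul (ha.trans (le_expk k a)) (hb.trans (le_expk k b))).trans ih)

lemma pow_le_expk_max {n a b kA kB x y : ℕ} (hn : 2 ≤ n) (ha : 0 < a) (hb : 0 < b)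
    (hkA : 0 < kA) (hx : x ≤ expk kA (n ^ a)) (hy : y ≤ expk kB (n ^ b)) :
    x ^ y ≤ expk (max (kB + 1) kA) (n ^ (a + b)) := by
  set j := max kB (kA - 1)
  have hj : max (kB + 1) kA = j + 1 := by omega
  have hna : 2 ≤ n ^ a := hn.trans (Nat.le_self_pow ha.ne' n)
  have hnb : 2 ≤ n ^ b := hn.trans (Nat.le_self_pow hb.ne' n)
  have hx' : x ≤ 2 ^ expk j (n ^ a) :=
    hx.trans (expk_mono_left _ (show kA ≤ j + 1 by omega))
  have hy' : y ≤ expk j (n ^ b) := hy.trans (expk_mono_left _ (le_max_left kB _))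
  rw [hj, expk_succ, pow_add]
  calc x ^ y ≤ (2 ^ expk j (n ^ a)) ^ expk j (n ^ b) :=
        (Nat.pow_le_pow_left hx' y).trans (Nat.pow_le_pow_right (Nat.two_pow_pos _) hy')
    _ = 2 ^ (expk j (n ^ a) * expk j (n ^ b)) := (pow_mul _ _ _).symm
    _ ≤ 2 ^ expk j (n ^ a * n ^ b) :=
        Nat.pow_le_pow_right two_pos (expk_mul_expk_le j hna hnb)

lemma one_le_orderP (π : PTy) : 1 ≤ orderP π := by
  cases π <;> simp [orderP]

instance sem2.finite (U : Type) [Finite U] : (π : PTy) → Finite (sem2 U π)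
  | .o => inferInstanceAs (Finite Bool)
  | .arrI π => have := sem2.finite U π; inferInstanceAs (Finite (U → sem2 U π))
  | .arrP ρ π =>
    have := sem2.finite U ρ; have := sem2.finite U π
    inferInstanceAs (Finite (sem2 U ρ → sem2 U π))

theorem exists_card_sem2_le_expk (π : PTy) :
    ∃ d, 0 < d ∧ ∀ U : Type, Finite U → 2 ≤ Nat.card U →
      Nat.card (sem2 U π) ≤ expk (orderP π) (Nat.card U ^ d) := by
  induction π with
  | o =>
    refine ⟨1, one_pos, fun U _ hU => ?_⟩
    show Nat.card Bool ≤ 2 ^ (Nat.card U ^ 1)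
    rw [Nat.card_eq_fintype_card, Fintype.card_bool, pow_one]
    exact hU.trans Nat.lt_two_pow_self.le
  | arrI π ih =>
    obtain ⟨d, hd, hπ⟩ := ih
    refine ⟨d + 1, d.succ_pos, fun U _ hU => ?_⟩
    show Nat.card (U → sem2 U π) ≤ expk (max (0 + 1) (orderP π)) _
    rw [Nat.card_fun]
    exact pow_le_expk_max hU hd one_pos (one_le_orderP π) (hπ U ‹_› hU) (pow_one _).ge
  | arrP ρ π ihρ ihπ =>
    obtain ⟨dρ, hdρ, hρ⟩ := ihρ
    obtain ⟨dπ, hdπ, hπ⟩ := ihπ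
    refine ⟨dπ + dρ, Nat.add_pos_left hdπ dρ, fun U _ hU => ?_⟩
    show Nat.card (sem2 U ρ → sem2 U π) ≤ _
    rw [Nat.card_fun]
    exact pow_le_expk_max hU hdπ hdρ (one_le_orderP π) (hπ U ‹_› hU) (hρ U ‹_› hU)

theorem stmt10 (ρ : ATy) :
    ∃ d : ℕ, ∀ U : Type, Finite U → 2 ≤ Nat.card U →
      Nat.card (semA U ρ) ≤ expk (orderA ρ) (Nat.card U ^ d) := by
  cases ρ with
  | iota => exact ⟨1, fun U _ _ => (pow_one _).ge⟩
  | pred π =>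
    obtain ⟨d, -, hd⟩ := exists_card_sem2_le_expk π
    exact ⟨d, hd⟩
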